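/- Let 0 ≤ a ≤ 1 and r > 0. Then ∫_{-a}^{a} e^{irs}(1-s²)^{-1/2} ds = e^{iar} f_a^+(r) + e^{-iar} f_a^-(r), where f_a^±(r) = ∓i ∫_0^∞ e^{-rs} (s² + 1 - a² ∓ 2ais)^{-1/2} ds and the square root is the principal branch. -/

import Mathlib

open MeasureTheory Real

/-- `f_a^±(r) = ∓i ∫_0^∞ e^{-rs}(s² + 1 - a² ∓ 2ais)^{-1/2} ds`, with the principal
branch of the inverse square root; `sgn = 1` gives `f_a^+` and `sgn = -1` gives `f_a^-`. -/
noncomputable def fpm (sgn a r : ℝ) : ℂ :=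
  (-(sgn : ℂ)) * Complex.I *
    ∫ s in Set.Ioi (0 : ℝ),
      Complex.exp (-(r * s : ℝ)) *
        (((s ^ 2 + 1 - a ^ 2 : ℝ) : ℂ) - (sgn : ℂ) * ((2 * a * s : ℝ) : ℂ) * Complex.I) ^
          (-(1 / 2) : ℂ)

noncomputable def Gc (r : ℝ) (z : ℂ) : ℂ :=
  Complex.exp (Complex.I * (r : ℂ) * z) * (1 - z ^ 2) ^ (-(1 / 2) : ℂ)

lemma re_one_sub_sq (z : ℂ) : (1 - z ^ 2).re = 1 - z.re ^ 2 + z.im ^ 2 := by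
  simp [Complex.sub_re, Complex.one_re, sq, Complex.mul_re]; ring

lemma im_one_sub_sq (z : ℂ) : (1 - z ^ 2).im = -(2 * z.re * z.im) := by
  simp [Complex.sub_im, Complex.one_im, sq, Complex.mul_im]; ring

lemma Gc_diffAt {r : ℝ} {z : ℂ} (hz : 0 < (1 - z ^ 2).re) : DifferentiableAt ℂ (Gc r) z := by
  apply DifferentiableAt.mul
  · exact (Complex.differentiable_exp _).comp z (by fun_prop)
  · exact DifferentiableAt.cpow (by fun_prop) (differentiableAt_const _) (Or.inl hz)

lemma rect (a r T : ℝ) (ha0 : 0 ≤ a) (ha1 : a < 1) (hT : 0 ≤ T) :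
    (∫ x in (-a)..a, Gc r x) =
      (∫ x in (-a)..a, Gc r (x + T * Complex.I))
        - Complex.I • (∫ y in (0:ℝ)..T, Gc r (a + y * Complex.I))
        + Complex.I • (∫ y in (0:ℝ)..T, Gc r (-a + y * Complex.I)) := by
  have key := Complex.integral_boundary_rect_eq_zero_of_differentiableOn (Gc r)
    (((-a : ℝ) : ℂ)) ((a : ℂ) + (T : ℂ) * Complex.I) ?_
  · simp only [Complex.ofReal_re, Complex.ofReal_im, Complex.add_re, Complex.add_im,
      Complex.mul_re, Complex.mul_im, Complex.I_re, Complex.I_im, Complex.ofReal_neg,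
      Complex.neg_re, Complex.neg_im] at key
    · norm_num at key
      simp only [smul_eq_mul, Complex.ofReal_neg]
      linear_combination key
  · intro z hz
    rw [Complex.mem_reProdIm] at hz
    apply (Gc_diffAt _).differentiableWithinAt
    rw [re_one_sub_sq]
    have h1 : z.re ∈ Set.Icc (-a) a := by
      simpa [Set.uIcc_of_le (by linarith : -a ≤ a)] using hz.1
    nlinarith [h1.1, h1.2, sq_nonneg z.im]

lemma norm_Gc (r : ℝ) (z : ℂ) (h : 1 - z ^ 2 ≠ 0) :
    ‖Gc r z‖ = Real.exp (-(r * z.im)) * ‖1 - z ^ 2‖ ^ (-(1 / 2) : ℝ) := by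
  rw [Gc, norm_mul, Complex.norm_exp, Complex.norm_cpow_of_ne_zero h]
  have h1 : (Complex.I * (r : ℂ) * z).re = -(r * z.im) := by
    simp [Complex.mul_re, Complex.mul_im]
  have h2 : ((-(1 / 2) : ℂ)).im = 0 := by norm_num
  have h3 : ((-(1 / 2) : ℂ)).re = -(1 / 2 : ℝ) := by norm_num
  rw [h1, h2, h3, mul_zero, Real.exp_zero, div_one]

lemma abs_Gc_le (r c : ℝ) (z : ℂ) (hc : 0 < c) (h : c ≤ (1 - z ^ 2).re) :
    ‖Gc r z‖ ≤ Real.exp (-(r * z.im)) * c ^ (-(1 / 2) : ℝ) := by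
  have habs : c ≤ ‖1 - z ^ 2‖ := h.trans (Complex.re_le_norm _)
  have hne : 1 - z ^ 2 ≠ 0 := by
    intro h0
    rw [h0] at habs
    simp at habs
    linarith
  rw [norm_Gc r z hne]
  exact mul_le_mul_of_nonneg_left
    (Real.rpow_le_rpow_of_nonpos hc habs (by norm_num)) (Real.exp_nonneg _)

lemma top_vanish (a r : ℝ) (ha0 : 0 ≤ a) (ha1 : a ≤ 1) (hr : 0 < r) :
    Filter.Tendsto (fun T : ℝ => ∫ x in (-a)..a, Gc r ((x : ℂ) + (T : ℂ) * Complex.I))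
      Filter.atTop (nhds 0) := by
  have hb : Filter.Tendsto (fun T : ℝ => Real.exp (-(r * T)) * |a - (-a)|)
      Filter.atTop (nhds 0) := by
    have : Filter.Tendsto (fun T : ℝ => Real.exp (-(r * T))) Filter.atTop (nhds 0) := by
      exact Real.tendsto_exp_atBot.comp (Filter.tendsto_neg_atTop_atBot.comp
        (Filter.Tendsto.const_mul_atTop hr Filter.tendsto_id))
    simpa using this.mul_const |a - (-a)|
  apply squeeze_zero_norm' _ hb
  filter_upwards [Filter.eventually_ge_atTop (1:ℝ)] with T hT
  apply intervalIntegral.norm_integral_le_of_norm_le_const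
  intro x hx
  have hx1 : x ^ 2 ≤ 1 := by
    rw [Set.uIoc_of_le (by linarith : -a ≤ a)] at hx
    nlinarith [hx.1, hx.2]
  have him : ((x : ℂ) + (T : ℂ) * Complex.I).im = T := by simp
  have hre : ((x : ℂ) + (T : ℂ) * Complex.I).re = x := by simp
  calc ‖Gc r ((x : ℂ) + (T : ℂ) * Complex.I)‖
      ≤ Real.exp (-(r * T)) * (T ^ 2) ^ (-(1 / 2) : ℝ) := by
        have := abs_Gc_le r (T ^ 2) ((x : ℂ) + (T : ℂ) * Complex.I)
          (by nlinarith) (by rw [re_one_sub_sq, hre, him]; nlinarith)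
        rw [him] at this
        exact this
    _ ≤ Real.exp (-(r * T)) * 1 := by
        apply mul_le_mul_of_nonneg_left _ (Real.exp_nonneg _)
        exact Real.rpow_le_one_of_one_le_of_nonpos (by nlinarith) (by norm_num)
    _ = Real.exp (-(r * T)) := mul_one _

lemma base_eq (sgn a s : ℝ) (hs : sgn = 1 ∨ sgn = -1) :
    1 - ((↑(sgn * a) : ℂ) + (s : ℂ) * Complex.I) ^ 2 =
      ((s ^ 2 + 1 - a ^ 2 : ℝ) : ℂ) - (sgn : ℂ) * ((2 * a * s : ℝ) : ℂ) * Complex.I := by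
  have hsq : (sgn : ℂ) ^ 2 = 1 := by rcases hs with h | h <;> simp [h]
  push_cast
  linear_combination (-(a:ℂ)^2) * hsq + (-(s:ℂ)^2) * Complex.I_sq

lemma Gc_vert (r a s sgn : ℝ) (hs : sgn = 1 ∨ sgn = -1) :
    Gc r ((↑(sgn * a) : ℂ) + (s : ℂ) * Complex.I) =
      Complex.exp (Complex.I * ((sgn * (a * r) : ℝ) : ℂ)) *
        (Complex.exp (-(r * s : ℝ)) *
          (((s ^ 2 + 1 - a ^ 2 : ℝ) : ℂ) - (sgn : ℂ) * ((2 * a * s : ℝ) : ℂ) * Complex.I) ^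
            (-(1 / 2) : ℂ)) := by
  rw [Gc, base_eq sgn a s hs,
    show Complex.I * (r : ℂ) * ((↑(sgn * a) : ℂ) + (s : ℂ) * Complex.I) =
        Complex.I * ((sgn * (a * r) : ℝ) : ℂ) + ((-(r * s) : ℝ) : ℂ) from by
      push_cast; linear_combination (r : ℂ) * (s : ℂ) * Complex.I_sq,
    Complex.exp_add, mul_assoc]
  norm_cast

lemma cont_vert (r c : ℝ) (hc : c ^ 2 < 1) :
    Continuous fun y : ℝ => Gc r ((c : ℂ) + (y : ℂ) * Complex.I) := by
  rw [continuous_iff_continuousAt]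
  intro y
  have hd : DifferentiableAt ℂ (Gc r) ((c : ℂ) + (y : ℂ) * Complex.I) := by
    apply Gc_diffAt
    rw [re_one_sub_sq]
    simp only [Complex.add_re, Complex.ofReal_re, Complex.mul_re, Complex.I_re,
      Complex.I_im, Complex.ofReal_im, Complex.add_im, Complex.mul_im]
    nlinarith [sq_nonneg ((((c:ℂ) + (y:ℂ)*Complex.I)).im)]
  have hct : ContinuousAt (fun y : ℝ => (c : ℂ) + (y : ℂ) * Complex.I) y := by fun_prop
  exact ContinuousAt.comp (g := Gc r) (f := fun y : ℝ => (c : ℂ) + (y : ℂ) * Complex.I)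
    hd.continuousAt hct

lemma integrable_vert (r c : ℝ) (hr : 0 < r) (hc : c ^ 2 < 1) :
    IntegrableOn (fun y : ℝ => Gc r ((c : ℂ) + (y : ℂ) * Complex.I)) (Set.Ioi 0) := by
  apply Integrable.mono' (g := fun y => (1 - c ^ 2) ^ (-(1 / 2) : ℝ) * Real.exp (-r * y))
  · exact (exp_neg_integrableOn_Ioi 0 hr).const_mul _
  · exact (cont_vert r c hc).aestronglyMeasurable.restrict
  · refine (ae_restrict_iff' measurableSet_Ioi).mpr (Filter.Eventually.of_forall fun y hy => ?_)
    have him : ((c : ℂ) + (y : ℂ) * Complex.I).im = y := by simp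
    have h := abs_Gc_le r (1 - c ^ 2) ((c : ℂ) + (y : ℂ) * Complex.I) (by nlinarith) ?_
    · rw [him] at h
      calc ‖Gc r ((c : ℂ) + (y : ℂ) * Complex.I)‖
          ≤ Real.exp (-(r * y)) * (1 - c ^ 2) ^ (-(1 / 2) : ℝ) := h
        _ = (1 - c ^ 2) ^ (-(1 / 2) : ℝ) * Real.exp (-r * y) := by rw [neg_mul]; ring
    · rw [re_one_sub_sq]
      simp only [Complex.add_re, Complex.ofReal_re, Complex.mul_re, Complex.I_re,
        Complex.I_im, Complex.ofReal_im, Complex.add_im, Complex.mul_im]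
      nlinarith [sq_nonneg ((((c:ℂ) + (y:ℂ)*Complex.I)).im)]

lemma bottom_eq (a r : ℝ) (ha0 : 0 ≤ a) (ha1 : a < 1) :
    (∫ s in (-a)..a,
        Complex.exp (Complex.I * ((r * s : ℝ) : ℂ)) * ((Real.sqrt (1 - s ^ 2) : ℝ) : ℂ)⁻¹) =
      ∫ x in (-a)..a, Gc r (x : ℂ) := by
  apply intervalIntegral.integral_congr
  intro x hx
  rw [Set.uIcc_of_le (by linarith : -a ≤ a)] at hx
  have hx1 : x ^ 2 < 1 := by nlinarith [hx.1, hx.2]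
  have h0 : (0 : ℝ) ≤ 1 - x ^ 2 := by nlinarith
  simp only [Gc]
  congr 1
  · congr 1
    push_cast
    ring
  · have hb : (1 : ℂ) - (x : ℂ) ^ 2 = ((1 - x ^ 2 : ℝ) : ℂ) := by push_cast; ring
    rw [hb, show (-(1 / 2) : ℂ) = ((-(1 / 2) : ℝ) : ℂ) by norm_num,
      ← Complex.ofReal_cpow h0,
      show (1 - x ^ 2 : ℝ) ^ (-(1 / 2) : ℝ) = (Real.sqrt (1 - x ^ 2))⁻¹ by
        rw [Real.rpow_neg h0, Real.sqrt_eq_rpow],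
      Complex.ofReal_inv]

theorem stmt_lt (a r : ℝ) (ha0 : 0 ≤ a) (ha1 : a < 1) (hr : 0 < r) :
    (∫ s in (-a)..a,
        Complex.exp (Complex.I * ((r * s : ℝ) : ℂ)) * ((Real.sqrt (1 - s ^ 2) : ℝ) : ℂ)⁻¹) =
      Complex.exp (Complex.I * ((a * r : ℝ) : ℂ)) * fpm 1 a r +
        Complex.exp (-(Complex.I * ((a * r : ℝ) : ℂ))) * fpm (-1) a r := by
  have hc1 : a ^ 2 < 1 := by nlinarith
  have hRint := integrable_vert r a hr hc1
  have hLint' := integrable_vert r (-a) hr (by nlinarith)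
  have hLint : IntegrableOn (fun y : ℝ => Gc r (-(a : ℂ) + (y : ℂ) * Complex.I))
      (Set.Ioi 0) := by
    simpa [Complex.ofReal_neg] using hLint'
  have htop := top_vanish a r ha0 ha1.le hr
  have hR := MeasureTheory.intervalIntegral_tendsto_integral_Ioi 0 hRint Filter.tendsto_id
  have hL := MeasureTheory.intervalIntegral_tendsto_integral_Ioi 0 hLint Filter.tendsto_id
  have hFt : Filter.Tendsto
      (fun T : ℝ => (∫ x in (-a)..a, Gc r ((x : ℂ) + (T : ℂ) * Complex.I))
        - Complex.I • (∫ y in (0:ℝ)..T, Gc r ((a : ℂ) + (y : ℂ) * Complex.I))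
        + Complex.I • (∫ y in (0:ℝ)..T, Gc r (-(a : ℂ) + (y : ℂ) * Complex.I)))
      Filter.atTop
      (nhds (0 - Complex.I • (∫ y in Set.Ioi (0:ℝ), Gc r ((a : ℂ) + (y : ℂ) * Complex.I))
        + Complex.I • (∫ y in Set.Ioi (0:ℝ), Gc r (-(a : ℂ) + (y : ℂ) * Complex.I)))) :=
    (htop.sub (hR.const_smul Complex.I)).add (hL.const_smul Complex.I)
  have hconst : Filter.Tendsto (fun _ : ℝ => (∫ x in (-a)..a, Gc r (x : ℂ))) Filter.atTop
      (nhds (0 - Complex.I • (∫ y in Set.Ioi (0:ℝ), Gc r ((a : ℂ) + (y : ℂ) * Complex.I))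
        + Complex.I • (∫ y in Set.Ioi (0:ℝ), Gc r (-(a : ℂ) + (y : ℂ) * Complex.I)))) := by
    apply hFt.congr'
    filter_upwards [Filter.eventually_ge_atTop (0:ℝ)] with T hT
    exact (rect a r T ha0 ha1 hT).symm
  have hbot : (∫ x in (-a)..a, Gc r (x : ℂ)) =
      0 - Complex.I • (∫ y in Set.Ioi (0:ℝ), Gc r ((a : ℂ) + (y : ℂ) * Complex.I))
        + Complex.I • (∫ y in Set.Ioi (0:ℝ), Gc r (-(a : ℂ) + (y : ℂ) * Complex.I)) :=
    tendsto_nhds_unique tendsto_const_nhds hconst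
  have key2 : ∀ sgn : ℝ, sgn = 1 ∨ sgn = -1 →
      (∫ y in Set.Ioi (0:ℝ), Gc r ((↑(sgn * a) : ℂ) + (y : ℂ) * Complex.I)) =
        Complex.exp (Complex.I * ((sgn * (a * r) : ℝ) : ℂ)) *
          ∫ s in Set.Ioi (0:ℝ),
            Complex.exp (-(r * s : ℝ)) *
              (((s ^ 2 + 1 - a ^ 2 : ℝ) : ℂ) - (sgn : ℂ) * ((2 * a * s : ℝ) : ℂ) * Complex.I) ^
                (-(1 / 2) : ℂ) := by
    intro sgn hs
    rw [← MeasureTheory.integral_const_mul]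
    exact MeasureTheory.integral_congr_ae
      (Filter.Eventually.of_forall fun y => Gc_vert r a y sgn hs)
  have k1 := key2 1 (Or.inl rfl)
  have k2 := key2 (-1) (Or.inr rfl)
  rw [show ((1 * a : ℝ) : ℂ) = (a : ℂ) by norm_num] at k1
  rw [show (((-1) * a : ℝ) : ℂ) = -(a : ℂ) by push_cast; ring] at k2
  rw [bottom_eq a r ha0 ha1, hbot, k1, k2, fpm, fpm]
  rw [show ((1 * (a * r) : ℝ) : ℂ) = ((a * r : ℝ) : ℂ) by norm_num,
    show (Complex.I * (((-1) * (a * r) : ℝ) : ℂ)) = -(Complex.I * ((a * r : ℝ) : ℂ)) by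
      push_cast; ring]
  push_cast
  simp only [smul_eq_mul]
  ring


lemma inv_sqrt_le {t u : ℝ} (h1 : 0 ≤ t) (h2 : t ≤ u) (h3 : u ≤ 2 * t) :
    (Real.sqrt u)⁻¹ ≤ t ^ (-(1 / 2) : ℝ) := by
  rw [Real.rpow_neg h1, ← Real.sqrt_eq_rpow]
  rcases eq_or_lt_of_le h1 with h | h
  · have hu : u = 0 := le_antisymm (by linarith) (by linarith)
    simp [← h, hu]
  · exact inv_anti₀ (Real.sqrt_pos.mpr h) (Real.sqrt_le_sqrt h2)

lemma q_integrable : IntegrableOn (fun s : ℝ => (Real.sqrt (1 - s ^ 2))⁻¹)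
    (Set.Icc (-1) 1) := by
  have hqm : Measurable fun s : ℝ => (Real.sqrt (1 - s ^ 2))⁻¹ :=
    ((Real.continuous_sqrt.comp (by continuity)).measurable).inv
  have h01 : IntegrableOn (fun s : ℝ => (Real.sqrt (1 - s ^ 2))⁻¹) (Set.Icc 0 1) := by
    have hg : IntervalIntegrable (fun x : ℝ => (1 - x) ^ (-(1 / 2) : ℝ)) volume 0 1 := by
      have := (intervalIntegral.intervalIntegrable_rpow'
        (a := 0) (b := 1) (by norm_num : (-1 : ℝ) < -(1 / 2))).comp_sub_left 1
      simpa using this.symm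
    have hg' : IntegrableOn (fun x : ℝ => (1 - x) ^ (-(1 / 2) : ℝ)) (Set.Icc 0 1) := by
      rw [integrableOn_Icc_iff_integrableOn_Ioc]
      rw [intervalIntegrable_iff, Set.uIoc_of_le (by norm_num : (0:ℝ) ≤ 1)] at hg
      exact hg
    apply hg'.mono' hqm.aestronglyMeasurable.restrict
    refine (ae_restrict_iff' measurableSet_Icc).mpr (Filter.Eventually.of_forall fun s hs => ?_)
    rw [Real.norm_eq_abs, abs_inv, _root_.abs_of_nonneg (Real.sqrt_nonneg _)]
    exact inv_sqrt_le (by linarith [hs.2]) (by nlinarith [hs.1, hs.2]) (by nlinarith [hs.1, hs.2])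
  have hm0 : IntegrableOn (fun s : ℝ => (Real.sqrt (1 - s ^ 2))⁻¹) (Set.Icc (-1) 0) := by
    have hg : IntervalIntegrable (fun x : ℝ => (1 + x) ^ (-(1 / 2) : ℝ)) volume (-1) 0 := by
      have := (intervalIntegral.intervalIntegrable_rpow'
        (a := 0) (b := 1) (by norm_num : (-1 : ℝ) < -(1 / 2))).comp_add_right 1
      simpa [add_comm] using this
    have hg' : IntegrableOn (fun x : ℝ => (1 + x) ^ (-(1 / 2) : ℝ)) (Set.Icc (-1) 0) := by
      rw [integrableOn_Icc_iff_integrableOn_Ioc]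
      rw [intervalIntegrable_iff, Set.uIoc_of_le (by norm_num : (-1:ℝ) ≤ 0)] at hg
      exact hg
    apply hg'.mono' hqm.aestronglyMeasurable.restrict
    refine (ae_restrict_iff' measurableSet_Icc).mpr (Filter.Eventually.of_forall fun s hs => ?_)
    rw [Real.norm_eq_abs, abs_inv, _root_.abs_of_nonneg (Real.sqrt_nonneg _)]
    exact inv_sqrt_le (by linarith [hs.1]) (by nlinarith [hs.1, hs.2]) (by nlinarith [hs.1, hs.2])
  have := hm0.union h01
  rwa [Set.Icc_union_Icc_eq_Icc (by norm_num : (-1:ℝ) ≤ 0) (by norm_num : (0:ℝ) ≤ 1)] at this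

lemma h_integrable (r : ℝ) : Integrable (fun s : ℝ =>
    Complex.exp (Complex.I * ((r * s : ℝ) : ℂ)) * ((Real.sqrt (1 - s ^ 2) : ℝ) : ℂ)⁻¹) := by
  have hsupp : Function.support (fun s : ℝ =>
      Complex.exp (Complex.I * ((r * s : ℝ) : ℂ)) * ((Real.sqrt (1 - s ^ 2) : ℝ) : ℂ)⁻¹) ⊆
      Set.Icc (-1) 1 := by
    intro s hs
    by_contra hmem
    apply hs
    have h1 : 1 - s ^ 2 ≤ 0 := by
      simp only [Set.mem_Icc, not_and_or, not_le] at hmem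
      rcases hmem with h | h <;> nlinarith
    have h0 : Real.sqrt (1 - s ^ 2) = 0 := Real.sqrt_eq_zero'.mpr (by linarith)
    simp [h0]
  apply (integrableOn_iff_integrable_of_support_subset hsupp).mp
  have hmeas : Measurable fun s : ℝ =>
      Complex.exp (Complex.I * ((r * s : ℝ) : ℂ)) * ((Real.sqrt (1 - s ^ 2) : ℝ) : ℂ)⁻¹ := by
    apply Measurable.mul
    · exact (Complex.continuous_exp.comp (by continuity)).measurable
    · exact ((Complex.continuous_ofReal.comp
        (Real.continuous_sqrt.comp (by continuity))).measurable).inv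
  apply q_integrable.mono' hmeas.aestronglyMeasurable.restrict
  refine (ae_restrict_iff' measurableSet_Icc).mpr (Filter.Eventually.of_forall fun s _ => ?_)
  rw [norm_mul, Complex.norm_exp]
  have : (Complex.I * ((r * s : ℝ) : ℂ)).re = 0 := by simp
  rw [this, Real.exp_zero, one_mul, ← Complex.ofReal_inv, Complex.norm_real, Real.norm_eq_abs,
    _root_.abs_of_nonneg (inv_nonneg.mpr (Real.sqrt_nonneg _))]

lemma lhs_tendsto (r : ℝ) {α : ℕ → ℝ} (hlim : Filter.Tendsto α Filter.atTop (nhds 1)) :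
    Filter.Tendsto (fun n => ∫ s in (-(α n))..(α n),
        Complex.exp (Complex.I * ((r * s : ℝ) : ℂ)) * ((Real.sqrt (1 - s ^ 2) : ℝ) : ℂ)⁻¹)
      Filter.atTop
      (nhds (∫ s in (-1 : ℝ)..1,
        Complex.exp (Complex.I * ((r * s : ℝ) : ℂ)) * ((Real.sqrt (1 - s ^ 2) : ℝ) : ℂ)⁻¹)) := by
  set h : ℝ → ℂ := fun s =>
    Complex.exp (Complex.I * ((r * s : ℝ) : ℂ)) * ((Real.sqrt (1 - s ^ 2) : ℝ) : ℂ)⁻¹ with hh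
  have hint := h_integrable r
  have hF : Continuous fun b : ℝ => ∫ x in (0:ℝ)..b, h x :=
    intervalIntegral.continuous_primitive (fun a b => hint.intervalIntegrable) 0
  have key : ∀ u : ℝ, (∫ s in (-u)..u, h s) =
      (∫ x in (0:ℝ)..u, h x) - ∫ x in (0:ℝ)..(-u), h x := by
    intro u
    exact (intervalIntegral.integral_interval_sub_left
      hint.intervalIntegrable hint.intervalIntegrable).symm
  have h1 : Filter.Tendsto (fun n => (∫ x in (0:ℝ)..(α n), h x) - ∫ x in (0:ℝ)..(-(α n)), h x)
      Filter.atTop (nhds ((∫ x in (0:ℝ)..(1:ℝ), h x) - ∫ x in (0:ℝ)..(-1:ℝ), h x)) := by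
    exact ((hF.tendsto 1).comp hlim).sub ((hF.tendsto (-1)).comp hlim.neg)
  rw [key 1]
  exact h1.congr fun n => (key (α n)).symm

lemma inv_sqrt_eq {s : ℝ} (hs : 0 ≤ s) : (Real.sqrt s)⁻¹ = s ^ (-(1 / 2) : ℝ) := by
  rw [Real.rpow_neg hs, ← Real.sqrt_eq_rpow]

lemma bound_integrable (r : ℝ) (hr : 0 < r) :
    IntegrableOn (fun s : ℝ => Real.exp (-(r * s)) * (Real.sqrt s)⁻¹) (Set.Ioi 0) := by
  have hmeas : Measurable fun s : ℝ => Real.exp (-(r * s)) * (Real.sqrt s)⁻¹ :=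
    (Real.measurable_exp.comp (by fun_prop)).mul (Real.continuous_sqrt.measurable.inv)
  have h1 : IntegrableOn (fun s : ℝ => Real.exp (-(r * s)) * (Real.sqrt s)⁻¹)
      (Set.Ioc 0 1) := by
    have hg : IntegrableOn (fun s : ℝ => s ^ (-(1 / 2) : ℝ)) (Set.Ioc 0 1) := by
      have := intervalIntegral.intervalIntegrable_rpow'
        (a := 0) (b := 1) (by norm_num : (-1 : ℝ) < -(1 / 2))
      rw [intervalIntegrable_iff, Set.uIoc_of_le (by norm_num : (0:ℝ) ≤ 1)] at this
      exact this
    apply hg.mono' hmeas.aestronglyMeasurable.restrict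
    refine (ae_restrict_iff' measurableSet_Ioc).mpr (Filter.Eventually.of_forall fun s hs => ?_)
    have h0 : 0 ≤ (Real.sqrt s)⁻¹ := inv_nonneg.mpr (Real.sqrt_nonneg _)
    rw [Real.norm_eq_abs, _root_.abs_of_nonneg (mul_nonneg (Real.exp_nonneg _) h0),
      ← inv_sqrt_eq hs.1.le]
    nlinarith [Real.exp_le_one_iff.mpr (by nlinarith [hs.1.le] : -(r * s) ≤ 0),
      Real.exp_nonneg (-(r * s))]
  have h2 : IntegrableOn (fun s : ℝ => Real.exp (-(r * s)) * (Real.sqrt s)⁻¹)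
      (Set.Ioi 1) := by
    have hg : IntegrableOn (fun s : ℝ => Real.exp (-r * s)) (Set.Ioi 1) :=
      exp_neg_integrableOn_Ioi 1 hr
    apply hg.mono' hmeas.aestronglyMeasurable.restrict
    refine (ae_restrict_iff' measurableSet_Ioi).mpr (Filter.Eventually.of_forall fun s hs => ?_)
    have hs1 : (1:ℝ) < s := hs
    have h0 : (Real.sqrt s)⁻¹ ≤ 1 := by
      rw [inv_le_one_iff₀]
      right
      rw [show (1:ℝ) = Real.sqrt 1 by simp]
      exact Real.sqrt_le_sqrt hs1.le
    have h0' : 0 ≤ (Real.sqrt s)⁻¹ := inv_nonneg.mpr (Real.sqrt_nonneg _)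
    rw [Real.norm_eq_abs, _root_.abs_of_nonneg (mul_nonneg (Real.exp_nonneg _) h0')]
    calc Real.exp (-(r * s)) * (Real.sqrt s)⁻¹ ≤ Real.exp (-(r * s)) * 1 :=
          mul_le_mul_of_nonneg_left h0 (Real.exp_nonneg _)
      _ = Real.exp (-r * s) := by rw [mul_one, neg_mul]
  have := h1.union h2
  rwa [Set.Ioc_union_Ioi_eq_Ioi (by norm_num : (0:ℝ) ≤ 1)] at this

lemma W_im (sgn a s : ℝ) :
    (((s ^ 2 + 1 - a ^ 2 : ℝ) : ℂ) - (sgn : ℂ) * ((2 * a * s : ℝ) : ℂ) * Complex.I).im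
      = -(sgn * (2 * a * s)) := by
  simp [Complex.sub_im, Complex.mul_im, Complex.ofReal_im, Complex.ofReal_re,
    ← Complex.ofReal_pow]

lemma W_mem_slitPlane {sgn a s : ℝ} (hs : sgn = 1 ∨ sgn = -1) (ha : 1 / 2 ≤ a) (hsp : 0 < s) :
    (((s ^ 2 + 1 - a ^ 2 : ℝ) : ℂ) - (sgn : ℂ) * ((2 * a * s : ℝ) : ℂ) * Complex.I) ∈
      Complex.slitPlane := by
  rw [Complex.mem_slitPlane_iff]
  right
  rw [W_im]
  rcases hs with h | h <;> rw [h] <;> intro hc <;> nlinarith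

lemma W_abs_ge {sgn a s : ℝ} (hs : sgn = 1 ∨ sgn = -1) (ha : 1 / 2 ≤ a) (hsp : 0 < s) :
    s ≤ ‖
      (((s ^ 2 + 1 - a ^ 2 : ℝ) : ℂ) - (sgn : ℂ) * ((2 * a * s : ℝ) : ℂ) * Complex.I)‖ := by
  have h2 := Complex.abs_im_le_norm
    (((s ^ 2 + 1 - a ^ 2 : ℝ) : ℂ) - (sgn : ℂ) * ((2 * a * s : ℝ) : ℂ) * Complex.I)
  rw [W_im] at h2
  refine le_trans ?_ h2
  have h3 : |(-(sgn * (2 * a * s)))| = |sgn| * (2 * a * s) := by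
    rw [abs_neg, abs_mul, _root_.abs_of_nonneg (by nlinarith : (0:ℝ) ≤ 2 * a * s)]
  have h4 : |sgn| = 1 := by rcases hs with h | h <;> simp [h]
  rw [h3, h4, one_mul]
  nlinarith

lemma fpm_tendsto (sgn r : ℝ) (hr : 0 < r) (hs : sgn = 1 ∨ sgn = -1) (α : ℕ → ℝ)
    (hα : ∀ n, 1 / 2 ≤ α n ∧ α n ≤ 1) (hlim : Filter.Tendsto α Filter.atTop (nhds 1)) :
    Filter.Tendsto (fun n => fpm sgn (α n) r) Filter.atTop (nhds (fpm sgn 1 r)) := by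
  simp only [fpm]
  apply Filter.Tendsto.const_mul
  apply MeasureTheory.tendsto_integral_of_dominated_convergence
    (bound := fun s => Real.exp (-(r * s)) * (Real.sqrt s)⁻¹)
  · intro n
    apply ContinuousOn.aestronglyMeasurable _ measurableSet_Ioi
    intro s hsp
    apply ContinuousAt.continuousWithinAt
    apply ContinuousAt.mul
    · exact Complex.continuous_exp.continuousAt.comp (by fun_prop)
    · have hWc : ContinuousAt (fun s : ℝ =>
          ((s ^ 2 + 1 - (α n) ^ 2 : ℝ) : ℂ) -
            (sgn : ℂ) * ((2 * (α n) * s : ℝ) : ℂ) * Complex.I) s := by fun_prop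
      exact ContinuousAt.comp (g := fun w : ℂ => w ^ (-(1 / 2) : ℂ))
        (continuousAt_cpow_const (W_mem_slitPlane hs (hα n).1 hsp)) hWc
  · exact bound_integrable r hr
  · intro n
    refine (ae_restrict_iff' measurableSet_Ioi).mpr (Filter.Eventually.of_forall fun s hsp => ?_)
    have hge := W_abs_ge (a := α n) (s := s) hs (hα n).1 hsp
    have hne : (((s ^ 2 + 1 - (α n) ^ 2 : ℝ) : ℂ) -
        (sgn : ℂ) * ((2 * (α n) * s : ℝ) : ℂ) * Complex.I) ≠ 0 := by
      intro h0
      rw [h0] at hge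
      simp at hge
      linarith [hsp.out]
    rw [norm_mul, Complex.norm_exp,
      Complex.norm_cpow_of_ne_zero hne]
    have hre : ((-(1 / 2) : ℂ)).re = -(1 / 2 : ℝ) := by norm_num
    have him : ((-(1 / 2) : ℂ)).im = 0 := by norm_num
    rw [hre, him, mul_zero, Real.exp_zero, div_one]
    rw [show (-(((r * s) : ℝ) : ℂ)).re = -(r * s) by simp]
    apply mul_le_mul_of_nonneg_left _ (Real.exp_nonneg _)
    rw [inv_sqrt_eq hsp.out.le]
    exact Real.rpow_le_rpow_of_nonpos hsp.out hge (by norm_num)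
  · refine (ae_restrict_iff' measurableSet_Ioi).mpr (Filter.Eventually.of_forall fun s hsp => ?_)
    apply Filter.Tendsto.const_mul
    have hWc : Continuous (fun a : ℝ =>
        ((s ^ 2 + 1 - a ^ 2 : ℝ) : ℂ) - (sgn : ℂ) * ((2 * a * s : ℝ) : ℂ) * Complex.I) := by
      fun_prop
    have hW : Filter.Tendsto (fun n =>
        ((s ^ 2 + 1 - (α n) ^ 2 : ℝ) : ℂ) -
          (sgn : ℂ) * ((2 * (α n) * s : ℝ) : ℂ) * Complex.I) Filter.atTop
        (nhds (((s ^ 2 + 1 - (1:ℝ) ^ 2 : ℝ) : ℂ) -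
          (sgn : ℂ) * ((2 * (1:ℝ) * s : ℝ) : ℂ) * Complex.I)) :=
      (hWc.continuousAt.tendsto).comp hlim
    exact ((continuousAt_cpow_const
      (W_mem_slitPlane (a := (1:ℝ)) hs (by norm_num) hsp)).tendsto).comp hW

/-- `∫_{-a}^a e^{irs}(1-s²)^{-1/2} ds = e^{iar} f_a^+(r) + e^{-iar} f_a^-(r)`. -/
theorem stmt_1 (a r : ℝ) (ha0 : 0 ≤ a) (ha1 : a ≤ 1) (hr : 0 < r) :
    (∫ s in (-a)..a,
        Complex.exp (Complex.I * ((r * s : ℝ) : ℂ)) * ((Real.sqrt (1 - s ^ 2) : ℝ) : ℂ)⁻¹) =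
      Complex.exp (Complex.I * ((a * r : ℝ) : ℂ)) * fpm 1 a r +
        Complex.exp (-(Complex.I * ((a * r : ℝ) : ℂ))) * fpm (-1) a r := by
  rcases lt_or_eq_of_le ha1 with hlt | heq
  · exact stmt_lt a r ha0 hlt hr
  · subst heq
    set α : ℕ → ℝ := fun n => 1 - 1 / ((n : ℝ) + 2) with hαdef
    have hα : ∀ n, 1 / 2 ≤ α n ∧ α n ≤ 1 := by
      intro n
      have h2 : (2:ℝ) ≤ (n : ℝ) + 2 := by
        have := Nat.cast_nonneg (α := ℝ) n
        linarith
      constructor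
      · have : 1 / ((n : ℝ) + 2) ≤ 1 / 2 := by
          apply one_div_le_one_div_of_le (by norm_num) h2
        simp only [hαdef]
        linarith
      · simp only [hαdef]
        have : 0 < 1 / ((n : ℝ) + 2) := by positivity
        linarith
    have hα0 : ∀ n, 0 ≤ α n := fun n => le_trans (by norm_num) (hα n).1
    have hα1 : ∀ n, α n < 1 := by
      intro n
      simp only [hαdef]
      have : 0 < 1 / ((n : ℝ) + 2) := by positivity
      linarith
    have hlim : Filter.Tendsto α Filter.atTop (nhds 1) := by
      have h1 : Filter.Tendsto (fun n : ℕ => ((n : ℝ) + 2)) Filter.atTop Filter.atTop :=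
        Filter.tendsto_atTop_add_const_right _ 2 tendsto_natCast_atTop_atTop
      have h2 : Filter.Tendsto (fun n : ℕ => 1 / ((n : ℝ) + 2)) Filter.atTop (nhds 0) := by
        simpa [one_div, Pi.inv_def] using h1.inv_tendsto_atTop
      have h3 : Filter.Tendsto (fun n : ℕ => 1 - 1 / ((n:ℝ) + 2)) Filter.atTop
          (nhds (1 - 0)) := tendsto_const_nhds.sub h2
      simpa [hαdef] using h3
    have heqn : ∀ n, (∫ s in (-(α n))..(α n),
        Complex.exp (Complex.I * ((r * s : ℝ) : ℂ)) * ((Real.sqrt (1 - s ^ 2) : ℝ) : ℂ)⁻¹) =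
        Complex.exp (Complex.I * ((α n * r : ℝ) : ℂ)) * fpm 1 (α n) r +
          Complex.exp (-(Complex.I * ((α n * r : ℝ) : ℂ))) * fpm (-1) (α n) r :=
      fun n => stmt_lt (α n) r (hα0 n) (hα1 n) hr
    have hL := lhs_tendsto r hlim
    have hexp : Continuous fun t : ℝ => Complex.exp (Complex.I * ((t * r : ℝ) : ℂ)) := by
      fun_prop
    have hexp2 : Continuous fun t : ℝ => Complex.exp (-(Complex.I * ((t * r : ℝ) : ℂ))) := by
      fun_prop
    have hR : Filter.Tendsto (fun n =>
        Complex.exp (Complex.I * ((α n * r : ℝ) : ℂ)) * fpm 1 (α n) r +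
          Complex.exp (-(Complex.I * ((α n * r : ℝ) : ℂ))) * fpm (-1) (α n) r)
        Filter.atTop
        (nhds (Complex.exp (Complex.I * (((1:ℝ) * r : ℝ) : ℂ)) * fpm 1 1 r +
          Complex.exp (-(Complex.I * (((1:ℝ) * r : ℝ) : ℂ))) * fpm (-1) 1 r)) := by
      exact ((hexp.continuousAt.tendsto.comp hlim).mul
          (fpm_tendsto 1 r hr (Or.inl rfl) α hα hlim)).add
        ((hexp2.continuousAt.tendsto.comp hlim).mul
          (fpm_tendsto (-1) r hr (Or.inr rfl) α hα hlim))
    exact tendsto_nhds_unique (Filter.Tendsto.congr heqn hL) hR
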